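/- Let T, S ∈ M_n(ℂ) be positive definite Hermitian matrices and suppose there are positive reals m ≤ m' < M' ≤ M with m·I ≤ T ≤ m'·I and M'·I ≤ S ≤ M·I in the Löwner order. Let 0 ≤ ν < κ ≤ 1, set h = M'/m', r = min{ν/κ, 1 − ν/κ}, R = max{ν/κ, 1 − ν/κ} and r' = min{2r, 1 − 2r}. Then, in the Löwner order, H_0(T,S) − (ν/κ)·(H_0(T,S) − H_κ(T,S)) ≤ K(h^{κ/2}, 2)^{−r'} · H_ν(T,S) + R·(H_κ(T,S) + H_0(T,S) − 2·H_{κ/2}(T,S)). -/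

import Mathlib

/-!
Put `X = T^{-1/2} S T^{-1/2}`. Every weighted geometric mean is `T^{1/2} X^α T^{1/2}`, so every
matrix in the statement is `T^{1/2} f(X) T^{1/2}` for a linear combination `f` of the scalar Heinz
functions `x ↦ (x^α + x^{1-α})/2`, and `f ↦ T^{1/2} f(X) T^{1/2}` is linear and monotone with
respect to the order of functions on the spectrum of `X`. From `T ≤ m'` and `M' ≤ S` we get
`X ≥ M'/m' = h`, so the theorem reduces to a scalar inequality for `x ≥ h ≥ 1`.

With `t = ν/κ`, that scalar inequality is the sum of the Kantorovich-refined reverse Young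
inequality `(1-t) + t u² ≤ K(u)^{-r'} u^{2t} + R (1-u)²` at `u = x^{κ/2}` and at `u = x^{-κ/2}`
(rescaled by `x`), followed by `K(x^{κ/2}) ≥ K(h^{κ/2})`, since `K` increases on `[1, ∞)`.
The reverse Young inequality is weighted AM-GM for `t ≤ 1/4`, Bernoulli's inequality for
`1/4 ≤ t ≤ 1/2`, and the symmetry `u ↦ u⁻¹`, `t ↦ 1 - t` otherwise.
-/

open scoped ComplexOrder

/-- Matrix power of a (Hermitian) matrix via the continuous functional calculus:
`t ↦ t ^ α` is applied to the eigenvalues. -/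
noncomputable def mpow {n : ℕ} (T : Matrix (Fin n) (Fin n) ℂ) (α : ℝ) :
    Matrix (Fin n) (Fin n) ℂ :=
  cfc (fun x : ℝ => x ^ α) T

/-- The κ-weighted geometric mean `T ♯_κ S = T^(1/2) (T^(-1/2) S T^(-1/2))^κ T^(1/2)`. -/
noncomputable def geomMean {n : ℕ} (T S : Matrix (Fin n) (Fin n) ℂ) (κ : ℝ) :
    Matrix (Fin n) (Fin n) ℂ :=
  mpow T (1 / 2) * mpow (mpow T (-(1 / 2)) * S * mpow T (-(1 / 2))) κ * mpow T (1 / 2)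

/-- The operator Heinz mean `H_κ(T,S) = (T ♯_κ S + T ♯_{1-κ} S)/2`. -/
noncomputable def opHeinz {n : ℕ} (κ : ℝ) (T S : Matrix (Fin n) (Fin n) ℂ) :
    Matrix (Fin n) (Fin n) ℂ :=
  (2⁻¹ : ℝ) • (geomMean T S κ + geomMean T S (1 - κ))

/-- The Löwner order: `A ≤ B` iff `B - A` is positive semidefinite. -/
def LoewnerLE {n : ℕ} (A B : Matrix (Fin n) (Fin n) ℂ) : Prop := (B - A).PosSemidef

/-- The Kantorovich constant `K(t,2) = (t+1)^2/(4t)`. -/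
noncomputable def kantorovich (t : ℝ) : ℝ := (t + 1) ^ 2 / (4 * t)

lemma kantorovich_pos {t : ℝ} (ht : 0 < t) : 0 < kantorovich t := by
  unfold kantorovich; positivity

lemma kantorovich_inv {t : ℝ} (ht : 0 < t) : kantorovich t⁻¹ = kantorovich t := by
  unfold kantorovich
  field_simp
  ring

lemma kantorovich_le_kantorovich {a b : ℝ} (ha : 1 ≤ a) (hab : a ≤ b) :
    kantorovich a ≤ kantorovich b := by
  have ha0 : 0 < a := by linarith
  have hb0 : 0 < b := by linarith
  unfold kantorovich
  rw [div_le_div_iff₀ (by positivity) (by positivity)]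
  nlinarith [mul_nonneg (sub_nonneg.2 hab) (sub_nonneg.2 (one_le_mul_of_one_le_of_one_le ha
    (ha.trans hab)))]

lemma kantorovich_rpow_neg {u : ℝ} (hu : 0 < u) (p : ℝ) :
    kantorovich u ^ (-p) = u ^ p / ((u + 1) / 2) ^ (2 * p) := by
  have hK : (kantorovich u)⁻¹ = u / ((u + 1) / 2) ^ 2 := by
    unfold kantorovich; field_simp; ring
  rw [Real.rpow_neg (kantorovich_pos hu).le, ← Real.inv_rpow (kantorovich_pos hu).le, hK,
    Real.div_rpow hu.le (by positivity), Real.rpow_mul (by positivity), Real.rpow_two]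

lemma one_sub_mul_le_rpow_neg {p s : ℝ} (hs : -1 < s) (hp0 : 0 ≤ p) (hp1 : p ≤ 1) :
    1 - p * s ≤ (1 + s) ^ (-p) := by
  have hs' : 0 < 1 + s := by linarith
  rcases le_or_gt (1 - p * s) 0 with hneg | hpos
  · exact hneg.trans (Real.rpow_pos_of_pos hs' _).le
  rw [Real.rpow_neg hs'.le, le_inv_comm₀ hpos (Real.rpow_pos_of_pos hs' _)]
  calc (1 + s) ^ p ≤ 1 + p * s := rpow_one_add_le_one_add_mul_self hs.le hp0 hp1
    _ ≤ (1 - p * s)⁻¹ := by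
      rw [← one_div, le_div_iff₀ hpos]
      nlinarith [sq_nonneg (p * s)]

lemma mul_le_kantorovich_rpow_neg_mul_rpow_of_le_half {s u : ℝ} (hs0 : 0 ≤ s) (hs : s ≤ 1 / 2)
    (hu : 0 < u) : u * ((2 - s) - (1 - s) * u) ≤ kantorovich u ^ (-s) * u ^ s := by
  set c := (u + 1) / 2 with hc_def
  have hc : 0 < c := by positivity
  set B := (2 - s) - (1 - s) * u
  rcases le_or_gt B 0 with hB | hB
  · exact (mul_nonpos_of_nonneg_of_nonpos hu.le hB).trans
      (mul_nonneg (Real.rpow_nonneg (kantorovich_pos hu).le _) (Real.rpow_nonneg hu.le _))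
  rw [kantorovich_rpow_neg hu, div_mul_eq_mul_div, ← Real.rpow_add hu,
    le_div_iff₀ (Real.rpow_pos_of_pos hc _)]
  have amgm : u ^ (1 - 2 * s) * c ^ (2 * s) ≤ (1 - s) * u + s := by
    have := Real.geom_mean_le_arith_mean2_weighted (by linarith : (0:ℝ) ≤ 1 - 2 * s)
      (by linarith : (0:ℝ) ≤ 2 * s) hu.le hc.le (by ring)
    linarith [show 2 * s * c = s * u + s by rw [hc_def]; ring]
  have hu1 : u = u ^ (1 - 2 * s) * u ^ (s + s) := by
    rw [← Real.rpow_add hu, show 1 - 2 * s + (s + s) = (1 : ℝ) by ring, Real.rpow_one]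
  calc u * B * c ^ (2 * s) = B * (u ^ (1 - 2 * s) * c ^ (2 * s)) * u ^ (s + s) := by
        nth_rw 1 [hu1]; ring
    _ ≤ B * ((1 - s) * u + s) * u ^ (s + s) := by gcongr
    _ ≤ 1 * u ^ (s + s) := by
        gcongr
        nlinarith [sq_nonneg ((1 - s) * (u - 1))]
    _ = u ^ (s + s) := one_mul _

lemma mul_le_kantorovich_rpow_neg_mul_rpow_of_half_le {s u : ℝ} (hs : 1 / 2 ≤ s) (hs1 : s ≤ 1)
    (hu : 0 < u) : u * ((2 - s) - (1 - s) * u) ≤ kantorovich u ^ (-(1 - s)) * u ^ s := by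
  have bernoulli := one_sub_mul_le_rpow_neg (p := 2 * (1 - s)) (s := (u + 1) / 2 - 1)
    (by linarith) (by linarith) (by linarith)
  rw [kantorovich_rpow_neg hu, div_mul_eq_mul_div, ← Real.rpow_add hu, div_eq_mul_inv,
    ← Real.rpow_neg (by positivity), show 1 - s + s = (1 : ℝ) by ring, Real.rpow_one]
  rw [add_sub_cancel] at bernoulli
  calc u * ((2 - s) - (1 - s) * u) = u * (1 - 2 * (1 - s) * ((u + 1) / 2 - 1)) := by ring
    _ ≤ _ := by gcongr

lemma one_sub_add_mul_sq_le_of_le_half {t u : ℝ} (ht0 : 0 ≤ t) (ht : t ≤ 1 / 2) (hu : 0 < u) :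
    (1 - t) + t * u ^ 2 ≤
      kantorovich u ^ (-min (2 * t) (1 - 2 * t)) * u ^ (2 * t) + (1 - t) * (1 - u) ^ 2 := by
  suffices u * ((2 - 2 * t) - (1 - 2 * t) * u) ≤
      kantorovich u ^ (-min (2 * t) (1 - 2 * t)) * u ^ (2 * t) by linarith
  rcases le_total (2 * t) (1 / 2) with h | h
  · rw [min_eq_left (by linarith)]
    exact mul_le_kantorovich_rpow_neg_mul_rpow_of_le_half (by linarith) h hu
  · rw [min_eq_right (by linarith)]
    exact mul_le_kantorovich_rpow_neg_mul_rpow_of_half_le h (by linarith) hu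

def kantorovichExponent (t : ℝ) : ℝ := min (2 * min t (1 - t)) (1 - 2 * min t (1 - t))

lemma kantorovichExponent_nonneg {t : ℝ} (ht0 : 0 ≤ t) (ht1 : t ≤ 1) :
    0 ≤ kantorovichExponent t := by
  have := le_min ht0 (sub_nonneg.2 ht1)
  have := min_le_left t (1 - t)
  have := min_le_right t (1 - t)
  exact le_min (by linarith) (by linarith)

lemma one_sub_add_mul_sq_le {t u : ℝ} (ht0 : 0 ≤ t) (ht1 : t ≤ 1) (hu : 0 < u) :
    (1 - t) + t * u ^ 2 ≤
      kantorovich u ^ (-kantorovichExponent t) * u ^ (2 * t) + max t (1 - t) * (1 - u) ^ 2 := by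
  unfold kantorovichExponent
  rcases le_total t (1 / 2) with ht | ht
  · rw [min_eq_left (show t ≤ 1 - t by linarith), max_eq_right (show t ≤ 1 - t by linarith)]
    exact one_sub_add_mul_sq_le_of_le_half ht0 ht hu
  rw [min_eq_right (show 1 - t ≤ t by linarith), max_eq_left (show 1 - t ≤ t by linarith)]
  have key := mul_le_mul_of_nonneg_right
    (one_sub_add_mul_sq_le_of_le_half (t := 1 - t) (by linarith) (by linarith) (inv_pos.2 hu))
    (sq_nonneg u)
  have hL : ((1 - (1 - t)) + (1 - t) * u⁻¹ ^ 2) * u ^ 2 = (1 - t) + t * u ^ 2 := by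
    field_simp; ring
  have hpow : u⁻¹ ^ (2 * (1 - t)) * u ^ 2 = u ^ (2 * t) := by
    rw [Real.inv_rpow hu.le, ← Real.rpow_neg hu.le, ← Real.rpow_natCast, ← Real.rpow_add hu]
    ring_nf
  have hR : (1 - (1 - t)) * (1 - u⁻¹) ^ 2 * u ^ 2 = t * (1 - u) ^ 2 := by
    field_simp; ring
  rwa [hL, kantorovich_inv hu, add_mul, mul_assoc, hpow, hR] at key

lemma one_sub_add_mul_rpow_le {t x : ℝ} (ht0 : 0 ≤ t) (ht1 : t ≤ 1) (hx : 0 < x) (κ : ℝ) :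
    (1 - t) + t * x ^ κ ≤ kantorovich (x ^ (κ / 2)) ^ (-kantorovichExponent t) * x ^ (κ * t)
      + max t (1 - t) * (1 - 2 * x ^ (κ / 2) + x ^ κ) := by
  have hu2 : (x ^ (κ / 2)) ^ 2 = x ^ κ := by
    rw [← Real.rpow_natCast, ← Real.rpow_mul hx.le]; norm_num
  have hut : (x ^ (κ / 2)) ^ (2 * t) = x ^ (κ * t) := by
    rw [← Real.rpow_mul hx.le]; ring_nf
  have key := one_sub_add_mul_sq_le ht0 ht1 (Real.rpow_pos_of_pos hx (κ / 2))
  rw [hut, sub_sq, hu2] at key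
  linarith

noncomputable def heinzFun (α : ℝ) : ℝ → ℝ :=
  (2⁻¹ : ℝ) • ((fun x => x ^ α) + fun x => x ^ (1 - α))

lemma heinzFun_apply (α x : ℝ) : heinzFun α x = (x ^ α + x ^ (1 - α)) / 2 := by
  rw [heinzFun, Pi.smul_apply, Pi.add_apply, smul_eq_mul]
  ring

lemma heinzFun_zero_sub_mul_le {ν κ h x : ℝ} (hν : 0 ≤ ν) (hνκ : ν ≤ κ) (hκ : 0 < κ)
    (hh : 1 ≤ h) (hx : h ≤ x) :
    heinzFun 0 x - ν / κ * (heinzFun 0 x - heinzFun κ x) ≤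
      kantorovich (h ^ (κ / 2)) ^ (-kantorovichExponent (ν / κ)) * heinzFun ν x
        + max (ν / κ) (1 - ν / κ) * (heinzFun κ x + heinzFun 0 x - 2 * heinzFun (κ / 2) x) := by
  set t := ν / κ with ht
  set R := max t (1 - t)
  have ht0 : 0 ≤ t := div_nonneg hν hκ.le
  have ht1 : t ≤ 1 := (div_le_one hκ).2 hνκ
  have hx0 : 0 < x := by linarith
  have hκt : κ * t = ν := by rw [ht]; field_simp
  set c := kantorovich (x ^ (κ / 2)) ^ (-kantorovichExponent t)
  have hc : c ≤ kantorovich (h ^ (κ / 2)) ^ (-kantorovichExponent t) :=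
    Real.rpow_le_rpow_of_nonpos (kantorovich_pos (by positivity))
      (kantorovich_le_kantorovich (Real.one_le_rpow hh (by positivity))
        (Real.rpow_le_rpow (by linarith) hx (by positivity)))
      (neg_nonpos.2 (kantorovichExponent_nonneg ht0 ht1))
  have hpos := one_sub_add_mul_rpow_le ht0 ht1 hx0 κ
  rw [hκt] at hpos
  have hneg : (1 - t) * x + t * x ^ (1 - κ) ≤
      c * x ^ (1 - ν) + R * (x - 2 * x ^ (1 - κ / 2) + x ^ (1 - κ)) := by
    have key := mul_le_mul_of_nonneg_right (one_sub_add_mul_rpow_le ht0 ht1 hx0 (-κ)) hx0.le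
    rw [neg_div, Real.rpow_neg hx0.le (κ / 2), kantorovich_inv (by positivity)] at key
    have pwx : ∀ a : ℝ, x ^ a * x = x ^ (1 + a) := fun a => by
      rw [add_comm, Real.rpow_add_one hx0.ne']
    calc (1 - t) * x + t * x ^ (1 - κ) = ((1 - t) + t * x ^ (-κ)) * x := by
          rw [add_mul, mul_assoc, pwx, ← sub_eq_add_neg]
      _ ≤ _ := key
      _ = c * (x ^ (-κ * t) * x) + R * (x - 2 * ((x ^ (κ / 2))⁻¹ * x) + x ^ (-κ) * x) := by ring
      _ = _ := by
          rw [pwx, pwx, ← Real.rpow_neg hx0.le, pwx, neg_mul, hκt, ← sub_eq_add_neg,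
            ← sub_eq_add_neg, ← sub_eq_add_neg]
  have hc' := mul_le_mul_of_nonneg_right hc
    (add_nonneg (Real.rpow_pos_of_pos hx0 ν).le (Real.rpow_pos_of_pos hx0 (1 - ν)).le)
  simp only [heinzFun_apply, Real.rpow_zero, sub_zero, Real.rpow_one]
  linarith

open scoped MatrixOrder

section SandwichCfc

variable {ι 𝕜 : Type*} [Fintype ι] [DecidableEq ι] [RCLike 𝕜]

noncomputable def sandwichCfc (P X : Matrix ι ι 𝕜) : (ℝ → ℝ) →ₗ[ℝ] Matrix ι ι 𝕜 where
  toFun f := P * cfc f X * P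
  map_add' f g := by
    rw [Pi.add_def, cfc_add X f g (X.finite_real_spectrum.continuousOn f)
      (X.finite_real_spectrum.continuousOn g), mul_add, add_mul]
  map_smul' c f := by
    rw [Pi.smul_def, cfc_smul c f X (X.finite_real_spectrum.continuousOn f), mul_smul_comm,
      smul_mul_assoc, RingHom.id_apply]

lemma sandwichCfc_mono {P X : Matrix ι ι 𝕜} (hP : IsSelfAdjoint P) (hX : IsSelfAdjoint X)
    {f g : ℝ → ℝ} (hfg : ∀ x ∈ spectrum ℝ X, f x ≤ g x) :
    sandwichCfc P X f ≤ sandwichCfc P X g :=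
  hP.conjugate_le_conjugate <| (cfc_le_iff f g X (X.finite_real_spectrum.continuousOn f)
    (X.finite_real_spectrum.continuousOn g)).2 hfg

lemma ofReal_smul_one (c : ℝ) :
    (c : ℂ) • (1 : Matrix ι ι ℂ) = algebraMap ℝ (Matrix ι ι ℂ) c := by
  rw [Algebra.algebraMap_eq_smul_one, Complex.coe_smul]

end SandwichCfc

variable {n : ℕ}

lemma isSelfAdjoint_mpow (A : Matrix (Fin n) (Fin n) ℂ) (α : ℝ) : IsSelfAdjoint (mpow A α) :=
  cfc_predicate _ _

lemma algebraMap_inv_le_mpow_neg_half_mul_self {T : Matrix (Fin n) (Fin n) ℂ} (hT : T.PosDef)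
    {c : ℝ} (hTc : T ≤ algebraMap ℝ _ c) :
    algebraMap ℝ _ c⁻¹ ≤ mpow T (-(1 / 2)) * mpow T (-(1 / 2)) := by
  have hT' : IsSelfAdjoint T := hT.isHermitian
  rw [mpow, ← cfc_mul _ _ T (T.finite_real_spectrum.continuousOn _)
    (T.finite_real_spectrum.continuousOn _),
    algebraMap_le_cfc_iff _ _ T (T.finite_real_spectrum.continuousOn _)]
  intro x hx
  have hx0 : 0 < x := hT.isStrictlyPositive.spectrum_pos hx
  rw [← Real.rpow_add hx0, show (-(1 / 2) + -(1 / 2) : ℝ) = -1 by norm_num, Real.rpow_neg_one]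
  exact inv_anti₀ hx0 ((le_algebraMap_iff_spectrum_le hT').1 hTc x hx)

lemma algebraMap_div_le_conjugate_mpow {T S : Matrix (Fin n) (Fin n) ℂ} (hT : T.PosDef)
    {a b : ℝ} (ha : 0 ≤ a) (hTb : T ≤ algebraMap ℝ _ b) (hSa : algebraMap ℝ _ a ≤ S) :
    algebraMap ℝ _ (a / b) ≤ mpow T (-(1 / 2)) * S * mpow T (-(1 / 2)) := by
  set Q := mpow T (-(1 / 2))
  calc algebraMap ℝ _ (a / b) = a • algebraMap ℝ _ b⁻¹ := by
        rw [div_eq_mul_inv, map_mul, Algebra.smul_def]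
    _ ≤ a • (Q * Q) := smul_le_smul_of_nonneg_left
        (algebraMap_inv_le_mpow_neg_half_mul_self hT hTb) ha
    _ = Q * algebraMap ℝ _ a * Q := by
        rw [Algebra.smul_def, ← mul_assoc, Algebra.commutes]
    _ ≤ Q * S * Q := (isSelfAdjoint_mpow T _).conjugate_le_conjugate hSa

lemma loewnerLE_iff_le {A B : Matrix (Fin n) (Fin n) ℂ} : LoewnerLE A B ↔ A ≤ B := Iff.rfl

lemma sandwichCfc_heinzFun (T S : Matrix (Fin n) (Fin n) ℂ) (α : ℝ) :
    sandwichCfc (mpow T (1 / 2)) (mpow T (-(1 / 2)) * S * mpow T (-(1 / 2))) (heinzFun α) =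
      opHeinz α T S := by
  rw [heinzFun, map_smul, map_add]
  rfl

theorem stmt_10_general {n : ℕ} (T S : Matrix (Fin n) (Fin n) ℂ)
    (hT : T.PosDef) (hS : S.PosDef)
    (m m' M' : ℝ) (hm : 0 < m) (hmm' : m ≤ m') (hm'M' : m' < M')
    (hT2 : LoewnerLE T ((m' : ℂ) • (1 : Matrix (Fin n) (Fin n) ℂ)))
    (hS1 : LoewnerLE ((M' : ℂ) • (1 : Matrix (Fin n) (Fin n) ℂ)) S)
    (ν κ : ℝ) (hν : 0 ≤ ν) (hνκ : ν < κ)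
    (h r R r' : ℝ) (hh : h = M' / m')
    (hr : r = min (ν / κ) (1 - ν / κ)) (hR : R = max (ν / κ) (1 - ν / κ))
    (hr' : r' = min (2 * r) (1 - 2 * r)) :
    LoewnerLE
      (opHeinz 0 T S - (ν / κ) • (opHeinz 0 T S - opHeinz κ T S))
      ((kantorovich (h ^ (κ / 2)) ^ (-r')) • opHeinz ν T S
        + R • (opHeinz κ T S + opHeinz 0 T S - (2 : ℝ) • opHeinz (κ / 2) T S)) := by
  obtain rfl : r' = kantorovichExponent (ν / κ) := by rw [hr', hr]; rfl
  subst hh hR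
  have hm' : 0 < m' := hm.trans_le hmm'
  rw [loewnerLE_iff_le, ofReal_smul_one] at hT2 hS1
  have hQ := isSelfAdjoint_mpow T (-(1 / 2))
  have hX : IsSelfAdjoint (mpow T (-(1 / 2)) * S * mpow T (-(1 / 2))) := by
    simpa only [hQ.star_eq] using IsSelfAdjoint.conjugate hS.isHermitian (mpow T (-(1 / 2)))
  have hspec := (algebraMap_le_iff_le_spectrum hX).1
    (algebraMap_div_le_conjugate_mpow hT (by linarith) hT2 hS1)
  have key := sandwichCfc_mono (isSelfAdjoint_mpow T (1 / 2)) hX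
    (f := heinzFun 0 - (ν / κ) • (heinzFun 0 - heinzFun κ))
    (g := kantorovich ((M' / m') ^ (κ / 2)) ^ (-kantorovichExponent (ν / κ)) • heinzFun ν
      + max (ν / κ) (1 - ν / κ) • (heinzFun κ + heinzFun 0 - (2 : ℝ) • heinzFun (κ / 2)))
    fun x hx => by
      simpa only [Pi.sub_apply, Pi.add_apply, Pi.smul_apply, smul_eq_mul] using
        heinzFun_zero_sub_mul_le hν hνκ.le (hν.trans_lt hνκ) ((one_le_div hm').2 hm'M'.le)
          (hspec x hx)
  simpa only [loewnerLE_iff_le, map_sub, map_add, map_smul, sandwichCfc_heinzFun] using key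

theorem stmt_10 {n : ℕ} (T S : Matrix (Fin n) (Fin n) ℂ)
    (hT : T.PosDef) (hS : S.PosDef)
    (m m' M' M : ℝ) (hm : 0 < m) (hmm' : m ≤ m') (hm'M' : m' < M') (hM'M : M' ≤ M)
    (hT1 : LoewnerLE ((m : ℂ) • (1 : Matrix (Fin n) (Fin n) ℂ)) T)
    (hT2 : LoewnerLE T ((m' : ℂ) • (1 : Matrix (Fin n) (Fin n) ℂ)))
    (hS1 : LoewnerLE ((M' : ℂ) • (1 : Matrix (Fin n) (Fin n) ℂ)) S)
    (hS2 : LoewnerLE S ((M : ℂ) • (1 : Matrix (Fin n) (Fin n) ℂ)))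
    (ν κ : ℝ) (hν : 0 ≤ ν) (hνκ : ν < κ) (hκ : κ ≤ 1)
    (h r R r' : ℝ) (hh : h = M' / m')
    (hr : r = min (ν / κ) (1 - ν / κ)) (hR : R = max (ν / κ) (1 - ν / κ))
    (hr' : r' = min (2 * r) (1 - 2 * r)) :
    LoewnerLE
      (opHeinz 0 T S - (ν / κ) • (opHeinz 0 T S - opHeinz κ T S))
      ((kantorovich (h ^ (κ / 2)) ^ (-r')) • opHeinz ν T S
        + R • (opHeinz κ T S + opHeinz 0 T S - (2 : ℝ) • opHeinz (κ / 2) T S)) :=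
  stmt_10_general T S hT hS m m' M' hm hmm' hm'M' hT2 hS1 ν κ hν hνκ h r R r' hh hr hR hr'
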